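/- For a bounded self-adjoint operator F on a complex Hilbert space, the spectrum of F equals the set {α ∈ ℝ : for no bounded self-adjoint G does (F − α·1) ∙ G = 1}, where ∙ is the anticommutator Jordan product (1/2)(AB + BA). -/

import Mathlib

/-!
If `A` is self-adjoint and `A ∙ G = 1` with `G` self-adjoint, then
`‖x‖² = Re ⟪x, (A ∙ G) x⟫ = Re ⟪A x, G x⟫ ≤ ‖G‖ ‖x‖ ‖A x‖`, so `A` is bounded below.
A bounded-below normal operator has closed range and trivial kernel, and its range is dense
because its orthogonal complement is the kernel; hence it is invertible. Conversely the inverse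
of an invertible self-adjoint operator is self-adjoint and is a Jordan inverse.
-/

section

open ContinuousLinearMap NNReal

variable {𝕜 E : Type*} [RCLike 𝕜] [NormedAddCommGroup E] [InnerProductSpace 𝕜 E]

theorem IsStarNormal.isUnit_of_antilipschitz [CompleteSpace E] {T : E →L[𝕜] E}
    (hT : IsStarNormal T) {c : ℝ≥0} (hc : AntilipschitzWith c T) : IsUnit T := by
  rw [isUnit_iff_bijective, bijective_iff_dense_range_and_antilipschitz,
    Submodule.topologicalClosure_eq_top_iff, hT.orthogonal_range, LinearMap.ker_eq_bot]
  exact ⟨hc.injective, c, hc⟩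

theorem norm_le_opNorm_mul_norm_apply_of_jordan_eq_one {A G : E →L[𝕜] E}
    (hA : (A : E →ₗ[𝕜] E).IsSymmetric) (hG : (G : E →ₗ[𝕜] E).IsSymmetric)
    (h : (1 / 2 : 𝕜) • (A * G + G * A) = 1) (x : E) : ‖x‖ ≤ ‖G‖ * ‖A x‖ := by
  have hjordan : A (G x) + G (A x) = (2 : 𝕜) • x := by
    simpa [← smul_add, inv_smul_eq_iff₀] using congr($h x)
  have hsq : ‖x‖ ^ 2 = RCLike.re (inner 𝕜 (A x) (G x)) := by
    have e1 : inner 𝕜 x (A (G x)) = inner 𝕜 (A x) (G x) := (hA x (G x)).symm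
    have e2 : inner 𝕜 x (G (A x)) = inner 𝕜 (G x) (A x) := (hG x (A x)).symm
    have := congrArg (fun y => RCLike.re (inner 𝕜 x y)) hjordan
    simp only [inner_add_right, e1, e2, map_add, inner_re_symm (𝕜 := 𝕜) (G x), inner_smul_right,
      inner_self_eq_norm_sq_to_K, RCLike.mul_re, RCLike.ofNat_re, RCLike.re_ofReal_pow,
      RCLike.ofNat_im, RCLike.im_ofReal_pow, mul_zero, sub_zero] at this
    linarith
  have hbound : ‖x‖ ^ 2 ≤ ‖A x‖ * (‖G‖ * ‖x‖) := by
    rw [hsq]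
    exact (RCLike.re_le_norm _).trans <| (norm_inner_le_norm _ _).trans <|
      mul_le_mul_of_nonneg_left (G.le_opNorm x) (norm_nonneg _)
  rcases eq_or_ne x 0 with rfl | hx
  · simp
  · nlinarith [norm_pos_iff.mpr hx]

theorem IsSelfAdjoint.isUnit_iff_exists_jordan_inverse [CompleteSpace E] {A : E →L[𝕜] E}
    (hA : IsSelfAdjoint A) :
    IsUnit A ↔ ∃ G : E →L[𝕜] E, IsSelfAdjoint G ∧ (1 / 2 : 𝕜) • (A * G + G * A) = 1 := by
  constructor
  · intro hunit
    refine ⟨Ring.inverse A, hA.ringInverse, ?_⟩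
    rw [Ring.mul_inverse_cancel A hunit, Ring.inverse_mul_cancel A hunit, ← two_smul 𝕜,
      smul_smul]
    norm_num
  · rintro ⟨G, hG, h⟩
    exact hA.isStarNormal.isUnit_of_antilipschitz (A.antilipschitz_of_bound (K := ‖G‖₊)
      (norm_le_opNorm_mul_norm_apply_of_jordan_eq_one hA.isSymmetric hG.isSymmetric h))

end

theorem spectrum_via_jordan_product
    {H : Type*} [NormedAddCommGroup H] [InnerProductSpace ℂ H] [CompleteSpace H]
    (F : H →L[ℂ] H) (hF : IsSelfAdjoint F) :
    {α : ℝ | (α : ℂ) ∈ spectrum ℂ F} =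
      {α : ℝ | ¬ ∃ G : H →L[ℂ] H, IsSelfAdjoint G ∧
        ((1 : ℂ)/2) • ((F - (α : ℂ) • 1) * G + G * (F - (α : ℂ) • 1)) = 1} := by
  ext α
  have hA : IsSelfAdjoint (F - (α : ℂ) • 1) :=
    hF.sub (.smul (Complex.conj_ofReal α) (.one _))
  rw [Set.mem_ofPred_eq, Set.mem_ofPred_eq, spectrum.mem_iff, IsUnit.sub_iff,
    Algebra.algebraMap_eq_smul_one, hA.isUnit_iff_exists_jordan_inverse]
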